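/- The series ∑_{M≥2} P(χ²_M < M(1-ε)) and ∑_{M≥1} M·P(χ²_M > M(1+ε)) both converge, for every fixed ε > 0; consequently, if χ_{M,1},...,χ_{M,M} are (possibly dependent) random variables with χ_{M,k} chi-distributed with k degrees of freedom, then max_{1≤k≤M} χ²_{M,k}/M → 1 almost surely as M → ∞. -/

import Mathlib

open MeasureTheory ProbabilityTheory Filter

/-- The chi-square distribution with `k` degrees of freedom, as the Gamma distribution
with shape `k/2` and rate `1/2`. -/
noncomputable def chiSqMeasure (k : ℕ) : Measure ℝ :=
  gammaMeasure ((k : ℝ) / 2) (1 / 2)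

/-!
Chernoff bounds. At the tilt `t = x / (2 (1 + x))` the moment generating function
`(1 - 2t)^{-k/2}` of `χ²_k` equals `(1 + x)^{k/2}`. With `ρ(x) = chiSqRate x < 1` this gives
`P(χ²_k ≥ N (1 + x)) ≤ ρ(x)^N` for `x ≥ 0` and `k ≤ N`, and `P(χ²_N ≤ N (1 + x)) ≤ ρ(x)^N`
for `-1 < x ≤ 0`. Both series are then dominated by `∑ ρ^M` and `∑ M ρ^M`. For the maximum, the
probability that some `χ²_{M,k}`, `k ≤ M`, exceeds `M (1 + ε)` is at most `M ρ(ε)^M` by a union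
bound, whatever the dependence, and `χ²_{M,M} < M (1 - ε)` has probability at most `ρ(-ε)^M`.
By Borel–Cantelli, almost surely `M (1 - ε) ≤ χ²_{M,M} ≤ max_k χ²_{M,k} ≤ M (1 + ε)` eventually.
-/

open Real Set

section Gamma

variable {a r t : ℝ}

lemma measurable_gammaPDF : Measurable (gammaPDF a r) :=
  (measurable_gammaPDFReal a r).ennreal_ofReal

lemma gammaPDFReal_mul_exp (hr : 0 ≤ r) (ht : t < r) (x : ℝ) :
    gammaPDFReal a r x * exp (t * x) = (r / (r - t)) ^ a * gammaPDFReal a (r - t) x := by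
  have hrt : 0 < r - t := sub_pos.2 ht
  by_cases hx : 0 ≤ x
  · simp only [gammaPDFReal, if_pos hx, div_rpow hr hrt.le]
    have : exp (-(r * x)) * exp (t * x) = exp (-((r - t) * x)) := by rw [← exp_add]; ring_nf
    rw [mul_assoc _ (exp _), this]
    field_simp [(rpow_pos_of_pos hrt a).ne']
  · simp [gammaPDFReal, if_neg hx]

lemma lintegral_exp_mul_gammaMeasure (ha : 0 < a) (hr : 0 ≤ r) (ht : t < r) :
    ∫⁻ x, ENNReal.ofReal (exp (t * x)) ∂gammaMeasure a r = ENNReal.ofReal ((r / (r - t)) ^ a) := by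
  have hrt : 0 < r - t := sub_pos.2 ht
  rw [gammaMeasure, lintegral_withDensity_eq_lintegral_mul _ measurable_gammaPDF (by fun_prop)]
  have tilt (x : ℝ) : gammaPDF a r x * ENNReal.ofReal (exp (t * x))
      = ENNReal.ofReal ((r / (r - t)) ^ a) * gammaPDF a (r - t) x := by
    rw [gammaPDF, gammaPDF, ← ENNReal.ofReal_mul' (exp_pos _).le, gammaPDFReal_mul_exp hr ht,
      ENNReal.ofReal_mul (by positivity)]
  simp only [Pi.mul_apply, tilt]
  rw [lintegral_const_mul _ measurable_gammaPDF, lintegral_gammaPDF_eq_one ha hrt, mul_one]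

lemma integrable_exp_mul_gammaMeasure (ha : 0 < a) (hr : 0 ≤ r) (ht : t < r) :
    Integrable (fun x => exp (t * x)) (gammaMeasure a r) := by
  rw [← lintegral_ofReal_ne_top_iff_integrable (by fun_prop) (.of_forall fun x => (exp_pos _).le),
    lintegral_exp_mul_gammaMeasure ha hr ht]
  exact ENNReal.ofReal_ne_top

lemma mgf_id_gammaMeasure (ha : 0 < a) (hr : 0 ≤ r) (ht : t < r) :
    mgf id (gammaMeasure a r) t = (r / (r - t)) ^ a := by
  have hrt : 0 < r - t := sub_pos.2 ht
  rw [mgf, integral_eq_lintegral_of_nonneg_ae (.of_forall fun x => (exp_pos _).le) (by fun_prop)]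
  simp only [id, lintegral_exp_mul_gammaMeasure ha hr ht]
  exact ENNReal.toReal_ofReal (by positivity)

end Gamma

section ChiSquare

variable {x : ℝ} {k N : ℕ}

lemma isProbabilityMeasure_chiSqMeasure (hk : 0 < k) : IsProbabilityMeasure (chiSqMeasure k) :=
  isProbabilityMeasure_gammaMeasure (by positivity) (by norm_num)

noncomputable def chiSqRate (x : ℝ) : ℝ := √(exp (-x) * (1 + x))

lemma chiSqRate_nonneg (x : ℝ) : 0 ≤ chiSqRate x := sqrt_nonneg _

lemma chiSqRate_lt_one (hx : x ≠ 0) : chiSqRate x < 1 := by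
  rw [chiSqRate, sqrt_lt' one_pos, one_pow, exp_neg, inv_mul_lt_iff₀ (exp_pos x), mul_one,
    add_comm]
  exact add_one_lt_exp hx

lemma div_two_mul_one_add_lt_half (hx : -1 < x) : x / (2 * (1 + x)) < 1 / 2 := by
  rw [div_lt_iff₀ (by linarith)]
  linarith

lemma mgf_id_chiSqMeasure (hk : 0 < k) (hx : -1 < x) :
    mgf id (chiSqMeasure k) (x / (2 * (1 + x))) = (1 + x) ^ ((k : ℝ) / 2) := by
  have h1x : 0 < 1 + x := by linarith
  rw [chiSqMeasure, mgf_id_gammaMeasure (by positivity) (by norm_num)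
    (div_two_mul_one_add_lt_half hx)]
  congr 1
  field_simp
  ring

lemma exp_mul_mgf_id_chiSqMeasure (hk : 0 < k) (hx : -1 < x) (N : ℕ) :
    exp (-(x / (2 * (1 + x))) * (N * (1 + x))) * mgf id (chiSqMeasure k) (x / (2 * (1 + x)))
      = chiSqRate x ^ N * (1 + x) ^ (((k : ℝ) - N) / 2) := by
  have h1x : 0 < 1 + x := by linarith
  rw [mgf_id_chiSqMeasure hk hx, chiSqRate, sqrt_eq_rpow, ← rpow_natCast,
    ← rpow_mul (by positivity), mul_rpow (exp_pos _).le h1x.le, mul_assoc, ← rpow_add h1x,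
    ← exp_mul]
  congr 2
  · field_simp
  · ring

lemma integrable_exp_mul_chiSqMeasure (hk : 0 < k) (hx : -1 < x) :
    Integrable (fun y => exp (x / (2 * (1 + x)) * id y)) (chiSqMeasure k) :=
  integrable_exp_mul_gammaMeasure (by positivity) (by norm_num) (div_two_mul_one_add_lt_half hx)

lemma chiSqMeasure_real_Ici_le (hx : 0 ≤ x) (hk : 0 < k) (hkN : k ≤ N) :
    (chiSqMeasure k).real (Ici (N * (1 + x))) ≤ chiSqRate x ^ N := by
  have := isProbabilityMeasure_chiSqMeasure hk
  have hx' : -1 < x := by linarith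
  calc (chiSqMeasure k).real (Ici (N * (1 + x)))
      ≤ exp (-(x / (2 * (1 + x))) * (N * (1 + x))) * mgf id (chiSqMeasure k) (x / (2 * (1 + x))) :=
        measure_ge_le_exp_mul_mgf _ (by positivity) (integrable_exp_mul_chiSqMeasure hk hx')
    _ = chiSqRate x ^ N * (1 + x) ^ (((k : ℝ) - N) / 2) := exp_mul_mgf_id_chiSqMeasure hk hx' N
    _ ≤ chiSqRate x ^ N := by
        refine mul_le_of_le_one_right (pow_nonneg (chiSqRate_nonneg x) N)
          (rpow_le_one_of_one_le_of_nonpos (by linarith) ?_)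
        have : (k : ℝ) ≤ N := by exact_mod_cast hkN
        linarith

lemma chiSqMeasure_real_Iic_le (hx : -1 < x) (hx0 : x ≤ 0) (hN : 0 < N) :
    (chiSqMeasure N).real (Iic (N * (1 + x))) ≤ chiSqRate x ^ N := by
  have := isProbabilityMeasure_chiSqMeasure hN
  have ht : x / (2 * (1 + x)) ≤ 0 := div_nonpos_of_nonpos_of_nonneg hx0 (by linarith)
  calc (chiSqMeasure N).real (Iic (N * (1 + x)))
      ≤ exp (-(x / (2 * (1 + x))) * (N * (1 + x))) * mgf id (chiSqMeasure N) (x / (2 * (1 + x))) :=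
        measure_le_le_exp_mul_mgf _ ht (integrable_exp_mul_chiSqMeasure hN hx)
    _ = chiSqRate x ^ N := by rw [exp_mul_mgf_id_chiSqMeasure hN hx N, sub_self, zero_div,
        rpow_zero, mul_one]

end ChiSquare

section Summability

variable {ε : ℝ}

lemma summable_natCast_mul_chiSqRate_pow {x : ℝ} (hx : x ≠ 0) :
    Summable fun n : ℕ => (n : ℝ) * chiSqRate x ^ n := by
  simpa using summable_pow_mul_geometric_of_norm_lt_one 1
    (by rw [norm_of_nonneg (chiSqRate_nonneg x)]; exact chiSqRate_lt_one hx)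

lemma summable_chiSqMeasure_Iio (hε : 0 < ε) :
    Summable fun M : ℕ => (chiSqMeasure (M + 2) (Iio (((M : ℝ) + 2) * (1 - ε)))).toReal := by
  set e := min ε (1 / 2)
  have he : 0 < e := lt_min hε (by norm_num)
  have hgeom := (summable_nat_add_iff 2).2 <|
    summable_geometric_of_lt_one (chiSqRate_nonneg (-e)) (chiSqRate_lt_one (neg_ne_zero.2 he.ne'))
  refine hgeom.of_nonneg_of_le (fun M => ENNReal.toReal_nonneg) fun M => ?_
  calc (chiSqMeasure (M + 2)).real (Iio (((M : ℝ) + 2) * (1 - ε)))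
      ≤ (chiSqMeasure (M + 2)).real (Iic (((M + 2 : ℕ) : ℝ) * (1 + -e))) := by
        have := isProbabilityMeasure_chiSqMeasure (k := M + 2) (by omega)
        refine measureReal_mono (Iio_subset_Iic ?_)
        push_cast
        gcongr
        linarith [min_le_left ε (1 / 2)]
    _ ≤ chiSqRate (-e) ^ (M + 2) :=
        chiSqMeasure_real_Iic_le (by linarith [min_le_right ε (1 / 2)]) (by linarith) (by omega)

lemma summable_mul_chiSqMeasure_Ioi (hε : 0 < ε) :
    Summable fun M : ℕ =>
      ((M : ℝ) + 1) * (chiSqMeasure (M + 1) (Ioi (((M : ℝ) + 1) * (1 + ε)))).toReal := by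
  have hsum := (summable_nat_add_iff 1).2 (summable_natCast_mul_chiSqRate_pow hε.ne')
  refine hsum.of_nonneg_of_le (fun M => by positivity) fun M => ?_
  have := isProbabilityMeasure_chiSqMeasure (k := M + 1) (by omega)
  push_cast
  gcongr
  calc (chiSqMeasure (M + 1)).real (Ioi (((M : ℝ) + 1) * (1 + ε)))
      ≤ (chiSqMeasure (M + 1)).real (Ici (((M + 1 : ℕ) : ℝ) * (1 + ε))) := by
        push_cast
        exact measureReal_mono Ioi_subset_Ici_self
    _ ≤ chiSqRate ε ^ (M + 1) := chiSqMeasure_real_Ici_le hε.le (by omega) le_rfl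

end Summability

section AlmostSure

variable {Ω : Type*} [MeasurableSpace Ω] {μ : Measure Ω}

lemma measure_preimage_eq_of_map_eq {α : Type*} [MeasurableSpace α] {f : Ω → α} {ν : Measure α}
    (hν : ν ≠ 0) (h : μ.map f = ν) {s : Set α} (hs : MeasurableSet s) : μ (f ⁻¹' s) = ν s := by
  rw [← h, Measure.map_apply_of_aemeasurable (.of_map_ne_zero (h ▸ hν)) hs]

lemma ae_eventually_notMem_of_summable {s : ℕ → Set Ω} {f : ℕ → ℝ} (hf : Summable f)
    (hs : ∀ n, μ (s n) ≤ ENNReal.ofReal (f n)) : ∀ᵐ ω ∂μ, ∀ᶠ n in atTop, ω ∉ s n :=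
  ae_eventually_notMem (ne_top_of_le_ne_top hf.tsum_ofReal_ne_top (ENNReal.tsum_le_tsum hs))

lemma ae_tendsto_of_forall_ae_eventually_dist_le {α : Type*} [PseudoMetricSpace α]
    {Y : ℕ → Ω → α} {l : α}
    (h : ∀ ε : ℝ, 0 < ε → ε < 1 → ∀ᵐ ω ∂μ, ∀ᶠ n in atTop, dist (Y n ω) l ≤ ε) :
    ∀ᵐ ω ∂μ, Tendsto (fun n => Y n ω) atTop (nhds l) := by
  have hall : ∀ᵐ ω ∂μ, ∀ m : ℕ, ∀ᶠ n in atTop, dist (Y n ω) l ≤ 1 / (m + 2) :=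
    ae_all_iff.2 fun m => h _ (by positivity) (by rw [div_lt_one (by positivity)]; linarith)
  filter_upwards [hall] with ω hω
  refine Metric.tendsto_atTop.2 fun δ hδ => ?_
  obtain ⟨m, hm⟩ := exists_nat_one_div_lt hδ
  obtain ⟨N, hN⟩ := (hω m).exists_forall_of_atTop
  refine ⟨N, fun n hn => (hN n hn).trans_lt (lt_of_le_of_lt ?_ hm)⟩
  gcongr
  linarith

lemma dist_iSup_div_one_le {M : ℕ} (hM : 0 < M) {f : ℕ → ℝ} {ε : ℝ}
    (hup : ∀ k : Fin M, f (k + 1) ≤ M * (1 + ε)) (hlow : M * (1 - ε) ≤ f M) :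
    dist ((⨆ k : Fin M, f (k + 1)) / M) 1 ≤ ε := by
  have : Nonempty (Fin M) := ⟨⟨0, hM⟩⟩
  have hM' : (0 : ℝ) < M := by exact_mod_cast hM
  have hsup_le : ⨆ k : Fin M, f (k + 1) ≤ M * (1 + ε) := ciSup_le hup
  have hle_sup : f M ≤ ⨆ k : Fin M, f (k + 1) := by
    simpa [Nat.sub_add_cancel hM] using
      le_ciSup (Set.finite_range fun k : Fin M => f (k + 1)).bddAbove ⟨M - 1, by omega⟩
  rw [Real.dist_eq, abs_le, le_sub_iff_add_le, sub_le_iff_le_add, le_div_iff₀ hM',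
    div_le_iff₀ hM']
  constructor <;> linarith

def IsChiArray (μ : Measure Ω) (X : ℕ → ℕ → Ω → ℝ) : Prop :=
  ∀ M k, 1 ≤ k → k ≤ M → μ.map (fun ω => X M k ω ^ 2) = chiSqMeasure k

variable {X : ℕ → ℕ → Ω → ℝ}

lemma measure_sq_mem_eq (hX : IsChiArray μ X) {M k : ℕ} (hk : 1 ≤ k) (hkM : k ≤ M) {s : Set ℝ}
    (hs : MeasurableSet s) :
    μ {ω | X M k ω ^ 2 ∈ s} = chiSqMeasure k s := by
  have := isProbabilityMeasure_chiSqMeasure hk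
  exact measure_preimage_eq_of_map_eq (IsProbabilityMeasure.ne_zero _) (hX M k hk hkM) hs

lemma ae_eventually_forall_sq_le (hX : IsChiArray μ X) {ε : ℝ} (hε : 0 < ε) :
    ∀ᵐ ω ∂μ, ∀ᶠ M in atTop, ∀ k : Fin M, X M (k + 1) ω ^ 2 ≤ M * (1 + ε) := by
  have hbad (M : ℕ) : μ (⋃ k : Fin M, {ω | X M (k + 1) ω ^ 2 ∈ Ioi (M * (1 + ε))})
      ≤ ENNReal.ofReal (M * chiSqRate ε ^ M) := by
    have hone (k : Fin M) : μ {ω | X M (k + 1) ω ^ 2 ∈ Ioi (M * (1 + ε))}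
        ≤ ENNReal.ofReal (chiSqRate ε ^ M) := by
      have := isProbabilityMeasure_chiSqMeasure (k := k + 1) (by omega)
      rw [measure_sq_mem_eq hX (by omega) k.2 measurableSet_Ioi]
      calc chiSqMeasure (k + 1) (Ioi (M * (1 + ε)))
          ≤ ENNReal.ofReal ((chiSqMeasure (k + 1)).real (Ici (M * (1 + ε)))) := by
            rw [ofReal_measureReal]
            exact measure_mono Ioi_subset_Ici_self
        _ ≤ ENNReal.ofReal (chiSqRate ε ^ M) :=
            ENNReal.ofReal_le_ofReal (chiSqMeasure_real_Ici_le hε.le (by omega) k.2)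
    calc μ (⋃ k : Fin M, {ω | X M (k + 1) ω ^ 2 ∈ Ioi (M * (1 + ε))})
        ≤ ∑ k : Fin M, μ {ω | X M (k + 1) ω ^ 2 ∈ Ioi (M * (1 + ε))} :=
          measure_iUnion_fintype_le _ _
      _ ≤ ∑ _k : Fin M, ENNReal.ofReal (chiSqRate ε ^ M) := Finset.sum_le_sum fun k _ => hone k
      _ = ENNReal.ofReal (M * chiSqRate ε ^ M) := by
        simp [ENNReal.ofReal_mul, Nat.cast_nonneg]
  filter_upwards [ae_eventually_notMem_of_summable (summable_natCast_mul_chiSqRate_pow hε.ne') hbad]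
    with ω hω
  filter_upwards [hω] with M hM
  simpa using hM

lemma ae_eventually_le_sq (hX : IsChiArray μ X) {ε : ℝ} (hε : 0 < ε) (hε1 : ε < 1) :
    ∀ᵐ ω ∂μ, ∀ᶠ M in atTop, M * (1 - ε) ≤ X M M ω ^ 2 := by
  have hbad (M : ℕ) : μ {ω | X M M ω ^ 2 ∈ Iio (M * (1 - ε))}
      ≤ ENNReal.ofReal (chiSqRate (-ε) ^ M) := by
    rcases M.eq_zero_or_pos with rfl | hM
    · simp [(sq_nonneg _).not_gt]
    have := isProbabilityMeasure_chiSqMeasure hM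
    rw [measure_sq_mem_eq hX hM le_rfl measurableSet_Iio]
    calc chiSqMeasure M (Iio (M * (1 - ε)))
        ≤ ENNReal.ofReal ((chiSqMeasure M).real (Iic (M * (1 + -ε)))) := by
          rw [ofReal_measureReal, ← sub_eq_add_neg]
          exact measure_mono Iio_subset_Iic_self
      _ ≤ ENNReal.ofReal (chiSqRate (-ε) ^ M) :=
          ENNReal.ofReal_le_ofReal (chiSqMeasure_real_Iic_le (by linarith) (by linarith) hM)
  have hgeom := summable_geometric_of_lt_one (chiSqRate_nonneg (-ε))
    (chiSqRate_lt_one (neg_ne_zero.2 hε.ne'))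
  filter_upwards [ae_eventually_notMem_of_summable hgeom hbad] with ω hω
  filter_upwards [hω] with M hM
  simpa using hM

lemma ae_eventually_dist_iSup_sq_div_le (hX : IsChiArray μ X) {ε : ℝ} (hε : 0 < ε) (hε1 : ε < 1) :
    ∀ᵐ ω ∂μ, ∀ᶠ M in atTop, dist ((⨆ k : Fin M, X M (k + 1) ω ^ 2) / M) 1 ≤ ε := by
  filter_upwards [ae_eventually_forall_sq_le hX hε, ae_eventually_le_sq hX hε hε1]
    with ω hup hlow
  filter_upwards [hup, hlow, eventually_gt_atTop 0] with M hupM hlowM hM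
  exact dist_iSup_div_one_le (f := fun j => X M j ω ^ 2) hM hupM hlowM

end AlmostSure

theorem max_chiSq_over_M_tendsto_one_ae_general
    {Ω : Type*} [MeasurableSpace Ω] (μ : Measure Ω)
    (X : ℕ → ℕ → Ω → ℝ)
    (hlaw : ∀ M k, 1 ≤ k → k ≤ M →
      μ.map (fun ω => (X M k ω) ^ 2) = chiSqMeasure k) :
    (∀ ε : ℝ, 0 < ε →
      (Summable fun M : ℕ =>
        (chiSqMeasure (M + 2) (Set.Iio (((M : ℝ) + 2) * (1 - ε)))).toReal) ∧
      (Summable fun M : ℕ =>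
        ((M : ℝ) + 1) *
          (chiSqMeasure (M + 1) (Set.Ioi (((M : ℝ) + 1) * (1 + ε)))).toReal)) ∧
    ∀ᵐ ω ∂μ, Tendsto
      (fun M : ℕ => (⨆ k : Fin M, (X M (k + 1) ω) ^ 2) / M) atTop (nhds 1) :=
  ⟨fun _ε hε => ⟨summable_chiSqMeasure_Iio hε, summable_mul_chiSqMeasure_Ioi hε⟩,
    ae_tendsto_of_forall_ae_eventually_dist_le fun _ε hε hε1 =>
      ae_eventually_dist_iSup_sq_div_le hlaw hε hε1⟩

/-- For every `ε > 0`, the series `∑_{M ≥ 2} P(χ²_M < M(1-ε))` and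
`∑_{M ≥ 1} M·P(χ²_M > M(1+ε))` converge; consequently, for (possibly dependent)
chi-distributed variables `χ_{M,k}` with `k` degrees of freedom,
`max_{1 ≤ k ≤ M} χ²_{M,k}/M → 1` almost surely as `M → ∞`. -/
theorem max_chiSq_over_M_tendsto_one_ae
    {Ω : Type*} [MeasurableSpace Ω] (μ : Measure Ω) [IsProbabilityMeasure μ]
    (X : ℕ → ℕ → Ω → ℝ)
    (hpos : ∀ M k ω, 0 ≤ X M k ω)
    (hlaw : ∀ M k, 1 ≤ k → k ≤ M →
      μ.map (fun ω => (X M k ω) ^ 2) = chiSqMeasure k) :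
    (∀ ε : ℝ, 0 < ε →
      (Summable fun M : ℕ =>
        (chiSqMeasure (M + 2) (Set.Iio (((M : ℝ) + 2) * (1 - ε)))).toReal) ∧
      (Summable fun M : ℕ =>
        ((M : ℝ) + 1) *
          (chiSqMeasure (M + 1) (Set.Ioi (((M : ℝ) + 1) * (1 + ε)))).toReal)) ∧
    ∀ᵐ ω ∂μ, Tendsto
      (fun M : ℕ => (⨆ k : Fin M, (X M (k + 1) ω) ^ 2) / M) atTop (nhds 1) :=
  max_chiSq_over_M_tendsto_one_ae_general μ X hlaw
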